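/- Let A ∈ ℝ^{m×n} with columns partitioned into sets V_1,…,V_k (viewed as submatrices), and for each i let Û_i ∈ ℝ^{m×d_i} contain the top d_i left singular vectors of V_i, with Σ d_i = r < rank(A). Let 𝒰_r ∈ ℝ^{m×r} contain the top r left singular vectors of A and A_r the best rank-r approximation of A. With L* = max_i ⌈r/d_i⌉, the partition energy satisfies Σ_{i=1}^k ‖(I_m − Û_i Û_i^T) V_i‖_F² ≤ ‖A − A_r‖_F² + (1 − 1/L*)‖A_r‖_F². -/

import Mathlib

open Matrix BigOperators

/-- The Frobenius norm of a real matrix. -/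
noncomputable def frobNorm {m n : Type*} [Fintype m] [Fintype n] (M : Matrix m n ℝ) : ℝ :=
  Real.sqrt (∑ i, ∑ j, (M i j) ^ 2)

/-- The spectral (ℓ²-operator) norm of a real matrix. -/
noncomputable def specNorm {m n : Type*} [Fintype m] [Fintype n] [DecidableEq n]
    (M : Matrix m n ℝ) : ℝ :=
  ‖LinearMap.toContinuousLinearMap (Matrix.toEuclideanLin M)‖

/-- Moore–Penrose pseudoinverse of a full-column-rank matrix: `(MᵀM)⁻¹Mᵀ`. -/
noncomputable def pinvFR {m n : Type*} [Fintype m] [Fintype n] [DecidableEq n]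
    (M : Matrix m n ℝ) : Matrix n m ℝ :=
  (Mᵀ * M)⁻¹ * Mᵀ

/-- The Euclidean norm of a real vector. -/
noncomputable def euclNorm {n : Type*} [Fintype n] (x : n → ℝ) : ℝ :=
  Real.sqrt (∑ i, (x i) ^ 2)

/-!
Write `Vᵢ` for the blocks of `A`. By Pythagoras, the left side is `‖A‖² - Σᵢ ‖ÛᵢÛᵢᵀVᵢ‖²` and the
right side is `‖A‖² - ‖A_r‖²/L*`, and `‖A_r‖² = Σᵢ ‖𝒰_rᵀVᵢ‖²`. So it suffices to show
`‖𝒰_rᵀVᵢ‖² ≤ L* ‖ÛᵢÛᵢᵀVᵢ‖²` for each block. Since `r ≤ L* dᵢ`, the `r` columns of `𝒰_r` split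
into `L*` groups of at most `dᵢ` columns; one group carries at least a `1/L*` share of
`‖𝒰_rᵀVᵢ‖²`, and it spans a subspace of dimension at most `dᵢ`, on which the projection of `Vᵢ`
is dominated by the optimal one, `ÛᵢÛᵢᵀVᵢ`.
-/

open Matrix

section Frobenius

variable {m n p : Type*} [Fintype m] [Fintype n] [Fintype p]

lemma frobNorm_nonneg (M : Matrix m n ℝ) : 0 ≤ frobNorm M :=
  Real.sqrt_nonneg _

lemma frobNorm_sq (M : Matrix m n ℝ) : frobNorm M ^ 2 = ∑ i, ∑ j, M i j ^ 2 :=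
  Real.sq_sqrt (by positivity)

lemma frobNorm_sq_eq_trace (M : Matrix m n ℝ) : frobNorm M ^ 2 = trace (Mᵀ * M) := by
  rw [frobNorm_sq, Finset.sum_comm]
  simp [trace, mul_apply, sq]

lemma frobNorm_sq_eq_sum_blocks {ι : Type*} [Fintype ι] {ν : ι → Type*} [∀ i, Fintype (ν i)]
    (B : Matrix m (Σ i, ν i) ℝ) :
    frobNorm B ^ 2 = ∑ i, frobNorm (B.submatrix id (Sigma.mk i)) ^ 2 := by
  simp only [frobNorm_sq, submatrix_apply, id_eq]
  rw [Finset.sum_comm, Fintype.sum_sigma]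
  exact Finset.sum_congr rfl fun i _ => Finset.sum_comm

variable [DecidableEq n]

lemma frobNorm_sq_orthonormal_mul {P : Matrix m n ℝ} (hP : Pᵀ * P = 1) (X : Matrix n p ℝ) :
    frobNorm (P * X) ^ 2 = frobNorm X ^ 2 := by
  rw [frobNorm_sq_eq_trace, frobNorm_sq_eq_trace, transpose_mul, Matrix.mul_assoc,
    ← Matrix.mul_assoc Pᵀ, hP, Matrix.one_mul]

lemma frobNorm_sq_proj_add_compl [DecidableEq m] {P : Matrix m n ℝ} (hP : Pᵀ * P = 1)
    (X : Matrix m p ℝ) :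
    frobNorm (P * Pᵀ * X) ^ 2 + frobNorm ((1 - P * Pᵀ) * X) ^ 2 = frobNorm X ^ 2 := by
  set Q := P * Pᵀ
  have hQQ : Q * Q = Q := by
    rw [Matrix.mul_assoc, ← Matrix.mul_assoc Pᵀ, hP, Matrix.one_mul]
  have hQt : Qᵀ = Q := by rw [transpose_mul, transpose_transpose]
  have hcompl : (1 - Q)ᵀ * (1 - Q) = 1 - Q := by
    rw [transpose_sub, transpose_one, hQt, Matrix.sub_mul, Matrix.mul_sub, Matrix.mul_sub, hQQ]
    simp
  have hproj : frobNorm (Q * X) ^ 2 = trace (Xᵀ * (Q * X)) := by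
    rw [frobNorm_sq_eq_trace, transpose_mul, Matrix.mul_assoc, ← Matrix.mul_assoc Qᵀ, hQt, hQQ]
  have hcompl' : ((1 - Q) * X)ᵀ * ((1 - Q) * X) = Xᵀ * X - Xᵀ * (Q * X) := by
    rw [transpose_mul, Matrix.mul_assoc, ← Matrix.mul_assoc (1 - Q)ᵀ, hcompl, Matrix.sub_mul,
      Matrix.one_mul, Matrix.mul_sub]
  rw [hproj, frobNorm_sq_eq_trace, frobNorm_sq_eq_trace, hcompl', trace_sub, add_sub_cancel]

end Frobenius

lemma mul_submatrix_id {l m n o : Type*} [Fintype m] (M : Matrix l m ℝ) (N : Matrix m n ℝ)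
    (e : o → n) : (M * N).submatrix id e = M * N.submatrix id e := by
  rw [submatrix_mul _ _ _ _ _ Function.bijective_id, submatrix_id_id]

lemma transpose_mul_submatrix_of_injective {m ι κ : Type*} [Fintype m] [DecidableEq ι]
    [DecidableEq κ] {U : Matrix m ι ℝ} (hU : Uᵀ * U = 1) {e : κ → ι}
    (he : Function.Injective e) :
    (U.submatrix id e)ᵀ * U.submatrix id e = 1 := by
  rw [transpose_submatrix, ← submatrix_mul _ _ _ _ _ Function.bijective_id, hU,
    submatrix_one e he]

lemma exists_card_le_sum_div_le {ι : Type*} [Fintype ι] {L D : ℕ}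
    (hcard : Fintype.card ι ≤ L * D) (g : ι → ℝ) :
    ∃ S : Finset ι, S.card ≤ D ∧ (∑ t, g t) / L ≤ ∑ t ∈ S, g t := by
  rcases Nat.eq_zero_or_pos L with rfl | hL
  · exact ⟨∅, by simp, by simp⟩
  obtain ⟨e⟩ : Nonempty (ι ↪ Fin L × Fin D) :=
    Function.Embedding.nonempty_of_card_le (by simpa using hcard)
  obtain ⟨j, -, hj⟩ := Finset.exists_le_sum_fiber_of_maps_to_of_nsmul_le_sum
    (f := fun t => (e t).1) (t := Finset.univ) (w := g) (b := (∑ t, g t) / L)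
    (fun _ _ => Finset.mem_univ _) ⟨⟨0, hL⟩, Finset.mem_univ _⟩
    (by rw [Finset.card_univ, Fintype.card_fin, nsmul_eq_mul, mul_div_cancel₀]; positivity)
  refine ⟨_, ?_, hj⟩
  -- The groups are the fibres of `Prod.fst ∘ e`; on each of them `Prod.snd ∘ e` is injective.
  calc _ ≤ (Finset.univ : Finset (Fin D)).card :=
        Finset.card_le_card_of_injOn (fun t => (e t).2) (fun _ _ => Finset.mem_univ _)
          fun a ha b hb hab => e.injective <| Prod.ext
            ((Finset.mem_filter.1 ha).2.trans (Finset.mem_filter.1 hb).2.symm) hab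
    _ = D := by simp

lemma le_sup_ceilDiv_mul {ι : Type*} (r : ℕ) {d : ι → ℕ} {s : Finset ι} {i : ι} (hd : 0 < d i)
    (hi : i ∈ s) : r ≤ (s.sup fun j => r ⌈/⌉ d j) * d i := by
  rw [mul_comm, ← ceilDiv_le_iff_le_mul hd]
  exact Finset.le_sup (f := fun j => r ⌈/⌉ d j) hi

lemma exists_orthonormal_frobNorm_sq_div_le {m ι n : Type*} [Fintype m] [Fintype ι]
    [DecidableEq ι] [Fintype n] {U : Matrix m ι ℝ} (hU : Uᵀ * U = 1) (V : Matrix m n ℝ)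
    {L D : ℕ} (hcard : Fintype.card ι ≤ L * D) :
    ∃ d' ≤ D, ∃ P : Matrix m (Fin d') ℝ, Pᵀ * P = 1 ∧
      frobNorm (Uᵀ * V) ^ 2 / L ≤ frobNorm (P * Pᵀ * V) ^ 2 := by
  obtain ⟨S, hSD, hS⟩ := exists_card_le_sum_div_le hcard fun t => ∑ j, (Uᵀ * V) t j ^ 2
  set e : Fin S.card → ι := fun a => S.equivFin.symm a
  have he : Function.Injective e := fun a b h => S.equivFin.symm.injective (Subtype.ext h)
  have hP := transpose_mul_submatrix_of_injective hU he
  refine ⟨S.card, hSD, U.submatrix id e, hP, ?_⟩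
  have hPV : (U.submatrix id e)ᵀ * V = (Uᵀ * V).submatrix e id := by
    rw [transpose_submatrix, submatrix_mul _ _ _ _ _ Function.bijective_id, submatrix_id_id]
  rw [Matrix.mul_assoc, frobNorm_sq_orthonormal_mul hP, hPV, frobNorm_sq, frobNorm_sq]
  simp only [submatrix_apply, id_eq]
  rwa [Equiv.sum_comp S.equivFin.symm (fun t : S => ∑ j, (Uᵀ * V) t j ^ 2),
    Finset.sum_coe_sort S fun t => ∑ j, (Uᵀ * V) t j ^ 2]

theorem partition_energy_bound_general {m k : ℕ} (nn d : Fin k → ℕ) (hd : ∀ i, 0 < d i)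
    (A : Matrix (Fin m) ((i : Fin k) × Fin (nn i)) ℝ)
    (r : ℕ)
    (Uh : (i : Fin k) → Matrix (Fin m) (Fin (d i)) ℝ)
    (hUh : ∀ i, (Uh i)ᵀ * Uh i = 1)
    (hmax : ∀ i (d' : ℕ), d' ≤ d i → ∀ P : Matrix (Fin m) (Fin d') ℝ, Pᵀ * P = 1 →
      frobNorm (P * Pᵀ * A.submatrix id (Sigma.mk i)) ≤
        frobNorm (Uh i * (Uh i)ᵀ * A.submatrix id (Sigma.mk i)))
    (Ur : Matrix (Fin m) (Fin r) ℝ) (hUr : Urᵀ * Ur = 1)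
    (Ar : Matrix (Fin m) ((i : Fin k) × Fin (nn i)) ℝ) (hAr : Ar = Ur * Urᵀ * A)
    (Lstar : ℕ) (hL : Lstar = Finset.univ.sup fun i => (r + d i - 1) / d i) :
    ∑ i, frobNorm ((1 - Uh i * (Uh i)ᵀ) * A.submatrix id (Sigma.mk i)) ^ 2 ≤
      frobNorm (A - Ar) ^ 2 + (1 - 1 / (Lstar : ℝ)) * frobNorm Ar ^ 2 := by
  set V := fun i => A.submatrix id (Sigma.mk i)
  have hblock : ∀ i, frobNorm (Urᵀ * V i) ^ 2 / Lstar ≤ frobNorm (Uh i * (Uh i)ᵀ * V i) ^ 2 := by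
    intro i
    have hrL : r ≤ Lstar * d i := hL ▸ le_sup_ceilDiv_mul r (hd i) (Finset.mem_univ i)
    obtain ⟨d', hd', P, hP, hle⟩ :=
      exists_orthonormal_frobNorm_sq_div_le hUr (V i) (by simpa using hrL)
    exact hle.trans (pow_le_pow_left₀ (frobNorm_nonneg _) (hmax i d' hd' P hP) 2)
  have hAr_sq : frobNorm Ar ^ 2 = ∑ i, frobNorm (Urᵀ * V i) ^ 2 := by
    rw [hAr, Matrix.mul_assoc, frobNorm_sq_orthonormal_mul hUr, frobNorm_sq_eq_sum_blocks]
    simp only [V, mul_submatrix_id]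
  have hA_sq : frobNorm (A - Ar) ^ 2 + frobNorm Ar ^ 2 = ∑ i, frobNorm (V i) ^ 2 := by
    rw [← frobNorm_sq_eq_sum_blocks, ← frobNorm_sq_proj_add_compl hUr A, hAr, Matrix.sub_mul,
      Matrix.one_mul, add_comm]
  have hLHS : ∀ i, frobNorm ((1 - Uh i * (Uh i)ᵀ) * V i) ^ 2 =
      frobNorm (V i) ^ 2 - frobNorm (Uh i * (Uh i)ᵀ * V i) ^ 2 := fun i => by
    rw [← frobNorm_sq_proj_add_compl (hUh i) (V i)]
    ring
  calc ∑ i, frobNorm ((1 - Uh i * (Uh i)ᵀ) * V i) ^ 2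
      = ∑ i, frobNorm (V i) ^ 2 - ∑ i, frobNorm (Uh i * (Uh i)ᵀ * V i) ^ 2 := by
        simp only [hLHS, Finset.sum_sub_distrib]
    _ ≤ frobNorm (A - Ar) ^ 2 + frobNorm Ar ^ 2 - frobNorm Ar ^ 2 / Lstar := by
        rw [hA_sq, hAr_sq, Finset.sum_div]
        exact sub_le_sub_left (Finset.sum_le_sum fun i _ => hblock i) _
    _ = frobNorm (A - Ar) ^ 2 + (1 - 1 / (Lstar : ℝ)) * frobNorm Ar ^ 2 := by ring

/-- partition energy bound: with columns of `A` partitioned into blocks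
`Vᵢ`, `Ûᵢ` the top `dᵢ` left singular vectors of `Vᵢ`, `Σ dᵢ = r`, `𝒰_r` the top `r` left
singular vectors of `A`, `A_r = 𝒰_r𝒰_rᵀA`, and `L* = maxᵢ ⌈r/dᵢ⌉`:
`Σᵢ ‖(I - ÛᵢÛᵢᵀ)Vᵢ‖_F² ≤ ‖A - A_r‖_F² + (1 - 1/L*)‖A_r‖_F²`. -/
theorem partition_energy_bound {m k : ℕ} (nn d : Fin k → ℕ) (hd : ∀ i, 0 < d i)
    (A : Matrix (Fin m) ((i : Fin k) × Fin (nn i)) ℝ)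
    (r : ℕ) (hr : r = ∑ i, d i) (hrank : r < A.rank)
    (Uh : (i : Fin k) → Matrix (Fin m) (Fin (d i)) ℝ)
    (hUh : ∀ i, (Uh i)ᵀ * Uh i = 1)
    (hmax : ∀ i (d' : ℕ), d' ≤ d i → ∀ P : Matrix (Fin m) (Fin d') ℝ, Pᵀ * P = 1 →
      frobNorm (P * Pᵀ * A.submatrix id (Sigma.mk i)) ≤
        frobNorm (Uh i * (Uh i)ᵀ * A.submatrix id (Sigma.mk i)))
    (Ur : Matrix (Fin m) (Fin r) ℝ) (hUr : Urᵀ * Ur = 1)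
    (hEY : ∀ P : Matrix (Fin m) (Fin r) ℝ, Pᵀ * P = 1 →
      frobNorm (A - Ur * Urᵀ * A) ≤ frobNorm (A - P * Pᵀ * A))
    (Ar : Matrix (Fin m) ((i : Fin k) × Fin (nn i)) ℝ) (hAr : Ar = Ur * Urᵀ * A)
    (Lstar : ℕ) (hL : Lstar = Finset.univ.sup fun i => (r + d i - 1) / d i) :
    ∑ i, frobNorm ((1 - Uh i * (Uh i)ᵀ) * A.submatrix id (Sigma.mk i)) ^ 2 ≤
      frobNorm (A - Ar) ^ 2 + (1 - 1 / (Lstar : ℝ)) * frobNorm Ar ^ 2 :=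
  partition_energy_bound_general nn d hd A r Uh hUh hmax Ur hUr Ar hAr Lstar hL
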